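/- arXiv:2507.11696 — 3 statements merged into one kernel-verified Lean document; each statement's English description precedes it below -/
import Mathlib

section
/- For all real a and ε, the matrix P·Zᴴ commutes with the Harper matrix at b = π/N: (P·Zᴴ) · h(a, π/N, ε) = h(a, π/N, ε) · (P·Zᴴ). -/
open Matrix Complex

/-- The primitive `N`-th root of unity `ω = exp(2πi/N)`. -/
noncomputable def omegaN (N : ℕ) : ℂ := Complex.exp (2 * (Real.pi : ℂ) * Complex.I / (N : ℂ))

/-- The clock matrix `Z` with `Z_{jk} = ω^j` if `j = k`, `0` otherwise. -/
noncomputable def clockZ (N : ℕ) : Matrix (Fin N) (Fin N) ℂ :=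
  Matrix.diagonal fun j => omegaN N ^ (j : ℕ)

/-- The shift matrix `X` with `X_{jk} = 1` if `j = k + 1 (mod N)`, `0` otherwise. -/
def shiftX (N : ℕ) : Matrix (Fin N) (Fin N) ℂ :=
  Matrix.of fun j k => if (j : ℕ) = ((k : ℕ) + 1) % N then 1 else 0

/-- The shifted Harper matrix
`h(a,b,ε) = (a/2)·e^{ib}·X + (a/2)·e^{−ib}·Xᴴ + (ε/2)·(Z + Zᴴ)`. -/
noncomputable def harper (N : ℕ) (a b ε : ℝ) : Matrix (Fin N) (Fin N) ℂ :=
  ((a : ℂ) / 2 * Complex.exp ((b : ℂ) * Complex.I)) • shiftX N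
  + ((a : ℂ) / 2 * Complex.exp (-(b : ℂ) * Complex.I)) • (shiftX N)ᴴ
  + ((ε : ℂ) / 2) • (clockZ N + (clockZ N)ᴴ)

/-- The parity matrix `P` with `P_{jk} = 1` if `j + k ≡ 0 (mod N)`, `0` otherwise. -/
def parityP (N : ℕ) : Matrix (Fin N) (Fin N) ℂ :=
  Matrix.of fun j k => if ((j : ℕ) + (k : ℕ)) % N = 0 then 1 else 0

/-- The discrete Fourier transform matrix `Q` with `Q_{jk} = ω^{jk}/√N`. -/
noncomputable def dftQ (N : ℕ) : Matrix (Fin N) (Fin N) ℂ :=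
  Matrix.of fun j k => omegaN N ^ ((j : ℕ) * (k : ℕ)) / (Real.sqrt N : ℂ)

/-!
Write `S = P·Zᴴ`. The Weyl relation `Z X = ω X Z` and the reflections `P X P = Xᴴ`, `P Z P = Zᴴ`
give `S X = ω̄ Xᴴ S`, `S Xᴴ = ω X S` and `S (Z + Zᴴ) = (Z + Zᴴ) S`. Hence conjugation by `S` maps
`h(a, b, ε)` to `h(a, 2π/N - b, ε)`, and `b = π/N` is the fixed point of `b ↦ 2π/N - b`.
-/

open Real

-- Both `Z` and `Zᴴ` are clock matrices, for the roots `ω` and `ω̄`.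
noncomputable def clock (N : ℕ) (ζ : ℂ) : Matrix (Fin N) (Fin N) ℂ :=
  diagonal fun j => ζ ^ (j : ℕ)

lemma conjTranspose_clock (N : ℕ) (ζ : ℂ) : (clock N ζ)ᴴ = clock N (star ζ) := by
  simp [clock, diagonal_conjTranspose, Pi.star_def, star_pow]

lemma clockZ_eq_clock (N : ℕ) : clockZ N = clock N (omegaN N) := rfl

lemma conjTranspose_clockZ (N : ℕ) : (clockZ N)ᴴ = clock N (star (omegaN N)) :=
  conjTranspose_clock _ _

lemma star_omegaN (N : ℕ) : star (omegaN N) = exp (-(2 * π * I / N)) := by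
  rw [omegaN, Complex.star_def, ← Complex.exp_conj]
  simp [map_ofNat, neg_div]

lemma omegaN_mul_star_self (N : ℕ) : omegaN N * star (omegaN N) = 1 := by
  rw [star_omegaN, omegaN, ← Complex.exp_add, add_neg_cancel, Complex.exp_zero]

lemma star_omegaN_mul_self (N : ℕ) : star (omegaN N) * omegaN N = 1 := by
  rw [mul_comm, omegaN_mul_star_self]

lemma exp_two_pi_div_sub_mul_I (N : ℕ) (b : ℝ) :
    exp (((2 * π / N - b : ℝ) : ℂ) * I) = omegaN N * exp (-b * I) := by
  rw [omegaN, ← Complex.exp_add]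
  push_cast
  ring_nf

lemma exp_neg_two_pi_div_sub_mul_I (N : ℕ) (b : ℝ) :
    exp (-((2 * π / N - b : ℝ) : ℂ) * I) = star (omegaN N) * exp (b * I) := by
  rw [star_omegaN, ← Complex.exp_add]
  push_cast
  ring_nf

section

variable {N : ℕ} [NeZero N]

lemma omegaN_pow_self : omegaN N ^ N = 1 := by
  rw [omegaN, ← Complex.exp_nat_mul, mul_div_cancel₀ _ (NeZero.ne (N : ℂ))]
  exact Complex.exp_two_pi_mul_I

lemma star_omegaN_pow_self : star (omegaN N) ^ N = 1 := by
  rw [← star_pow, omegaN_pow_self, star_one]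

lemma pow_val_add_one {ζ : ℂ} (hζ : ζ ^ N = 1) (k : Fin N) :
    ζ ^ ((k + 1 : Fin N) : ℕ) = ζ ^ (k : ℕ) * ζ := by
  rw [Fin.val_add, Fin.val_one', Nat.add_mod_mod, ← pow_eq_pow_mod _ hζ, pow_succ]

lemma pow_val_eq_of_add_eq_zero {ζ η : ℂ} (hζ : ζ ^ N = 1) (hηζ : η * ζ = 1) {j k : Fin N}
    (hjk : j + k = 0) : η ^ (j : ℕ) = ζ ^ (k : ℕ) := by
  have hroot : ζ ^ (j : ℕ) * ζ ^ (k : ℕ) = 1 := by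
    rw [← pow_add, pow_eq_pow_mod _ hζ, ← Fin.val_add, hjk, Fin.val_zero, pow_zero]
  calc η ^ (j : ℕ) = η ^ (j : ℕ) * (ζ ^ (j : ℕ) * ζ ^ (k : ℕ)) := by rw [hroot, mul_one]
    _ = (η * ζ) ^ (j : ℕ) * ζ ^ (k : ℕ) := by ring
    _ = ζ ^ (k : ℕ) := by rw [hηζ, one_pow, one_mul]

lemma shiftX_apply (j k : Fin N) : shiftX N j k = if j = k + 1 then 1 else 0 := by
  simp only [shiftX, of_apply, Fin.ext_iff, Fin.val_add, Fin.val_one', Nat.add_mod_mod]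

lemma parityP_apply (j k : Fin N) : parityP N j k = if j + k = 0 then 1 else 0 := by
  simp only [parityP, of_apply, Fin.ext_iff, Fin.val_add, Fin.val_zero]

variable {m : Type*}

lemma mul_shiftX_apply (M : Matrix m (Fin N) ℂ) (i : m) (k : Fin N) :
    (M * shiftX N) i k = M i (k + 1) := by
  simp [mul_apply, shiftX_apply]

lemma mul_conjTranspose_shiftX_apply (M : Matrix m (Fin N) ℂ) (i : m) (k : Fin N) :
    (M * (shiftX N)ᴴ) i k = M i (k - 1) := by
  simp [mul_apply, shiftX_apply, ← sub_eq_iff_eq_add]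

lemma shiftX_mul_apply (M : Matrix (Fin N) m ℂ) (j : Fin N) (i : m) :
    (shiftX N * M) j i = M (j - 1) i := by
  simp [mul_apply, shiftX_apply, ← sub_eq_iff_eq_add]

lemma conjTranspose_shiftX_mul_apply (M : Matrix (Fin N) m ℂ) (j : Fin N) (i : m) :
    ((shiftX N)ᴴ * M) j i = M (j + 1) i := by
  simp [mul_apply, shiftX_apply]

variable {ζ η : ℂ}

lemma clock_mul_shiftX (hζ : ζ ^ N = 1) : clock N ζ * shiftX N = ζ • (shiftX N * clock N ζ) := by
  ext j k
  simp only [clock, diagonal_mul, mul_diagonal, Matrix.smul_apply, smul_eq_mul, shiftX_apply]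
  split_ifs with h
  · rw [h, pow_val_add_one hζ]
    ring
  · simp

lemma clock_mul_conjTranspose_shiftX (hζ : ζ ^ N = 1) (hηζ : η * ζ = 1) :
    clock N ζ * (shiftX N)ᴴ = η • ((shiftX N)ᴴ * clock N ζ) := by
  ext j k
  simp only [clock, diagonal_mul, mul_diagonal, Matrix.smul_apply, smul_eq_mul,
    conjTranspose_apply, shiftX_apply, apply_ite star, star_one, star_zero]
  split_ifs with h
  · rw [h, pow_val_add_one hζ]
    linear_combination -ζ ^ (j : ℕ) * hηζ
  · simp

lemma parityP_mul_clock (hζ : ζ ^ N = 1) (hηζ : η * ζ = 1) :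
    parityP N * clock N ζ = clock N η * parityP N := by
  ext j k
  simp only [clock, diagonal_mul, mul_diagonal, parityP_apply]
  split_ifs with h
  · rw [pow_val_eq_of_add_eq_zero hζ hηζ h, one_mul, mul_one]
  · simp

lemma parityP_mul_shiftX : parityP N * shiftX N = (shiftX N)ᴴ * parityP N := by
  ext j k
  rw [mul_shiftX_apply, conjTranspose_shiftX_mul_apply, parityP_apply, parityP_apply,
    ← add_assoc, add_right_comm]

lemma parityP_mul_conjTranspose_shiftX : parityP N * (shiftX N)ᴴ = shiftX N * parityP N := by
  ext j k
  rw [mul_conjTranspose_shiftX_apply, shiftX_mul_apply, parityP_apply, parityP_apply,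
    ← add_sub_assoc, sub_add_eq_add_sub]

lemma parityP_mul_conjTranspose_clockZ_mul_shiftX :
    parityP N * (clockZ N)ᴴ * shiftX N
      = star (omegaN N) • ((shiftX N)ᴴ * (parityP N * (clockZ N)ᴴ)) := by
  rw [conjTranspose_clockZ N, mul_assoc, clock_mul_shiftX star_omegaN_pow_self, Matrix.mul_smul,
    ← mul_assoc, parityP_mul_shiftX, mul_assoc]

lemma parityP_mul_conjTranspose_clockZ_mul_conjTranspose_shiftX :
    parityP N * (clockZ N)ᴴ * (shiftX N)ᴴ = omegaN N • (shiftX N * (parityP N * (clockZ N)ᴴ)) := by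
  rw [conjTranspose_clockZ N, mul_assoc,
    clock_mul_conjTranspose_shiftX star_omegaN_pow_self (omegaN_mul_star_self N), Matrix.mul_smul,
    ← mul_assoc, parityP_mul_conjTranspose_shiftX, mul_assoc]

lemma parityP_mul_conjTranspose_clockZ_mul_clockZ :
    parityP N * (clockZ N)ᴴ * clockZ N = (clockZ N)ᴴ * (parityP N * (clockZ N)ᴴ) := by
  have hcomm : (clockZ N)ᴴ * clockZ N = clockZ N * (clockZ N)ᴴ := by
    rw [conjTranspose_clockZ N, clockZ_eq_clock, clock, clock]
    exact (commute_diagonal _ _).eq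
  rw [mul_assoc, hcomm, ← mul_assoc, conjTranspose_clockZ N, clockZ_eq_clock,
    parityP_mul_clock omegaN_pow_self (star_omegaN_mul_self N), mul_assoc]

lemma parityP_mul_conjTranspose_clockZ_mul_conjTranspose_clockZ :
    parityP N * (clockZ N)ᴴ * (clockZ N)ᴴ = clockZ N * (parityP N * (clockZ N)ᴴ) := by
  rw [conjTranspose_clockZ N, clockZ_eq_clock, ← mul_assoc,
    ← parityP_mul_clock star_omegaN_pow_self (omegaN_mul_star_self N)]

end

lemma parityP_mul_conjTranspose_clockZ_mul_harper (N : ℕ) (a b ε : ℝ) :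
    parityP N * (clockZ N)ᴴ * harper N a b ε
      = harper N a (2 * π / N - b) ε * (parityP N * (clockZ N)ᴴ) := by
  rcases N.eq_zero_or_pos with rfl | hN
  · exact Subsingleton.elim _ _
  have : NeZero N := ⟨hN.ne'⟩
  simp only [harper, mul_add, add_mul, Matrix.mul_smul, Matrix.smul_mul, smul_smul,
    parityP_mul_conjTranspose_clockZ_mul_shiftX,
    parityP_mul_conjTranspose_clockZ_mul_conjTranspose_shiftX,
    parityP_mul_conjTranspose_clockZ_mul_clockZ,
    parityP_mul_conjTranspose_clockZ_mul_conjTranspose_clockZ, exp_two_pi_div_sub_mul_I,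
    exp_neg_two_pi_div_sub_mul_I]
  module

theorem parity_clock_commutes_harper_general (N : ℕ) (a ε : ℝ) :
    (parityP N * (clockZ N)ᴴ) * harper N a (Real.pi / N) ε
      = harper N a (Real.pi / N) ε * (parityP N * (clockZ N)ᴴ) := by
  have h := parityP_mul_conjTranspose_clockZ_mul_harper N a (π / N) ε
  rwa [show 2 * π / N - π / N = π / N by ring] at h

/-- The matrix `P·Zᴴ` commutes with the Harper matrix at `b = π/N`. -/
theorem parity_clock_commutes_harper (N : ℕ) (hN : 2 ≤ N) (a ε : ℝ) :
    (parityP N * (clockZ N)ᴴ) * harper N a (Real.pi / N) ε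
      = harper N a (Real.pi / N) ε * (parityP N * (clockZ N)ᴴ) :=
  parity_clock_commutes_harper_general N a ε
end

section
/- If N is even, then for all real a, b, ε the spectrum (set of eigenvalues in ℂ) of the Harper matrix h(a, b, ε) equals the spectrum of h(a, b, −ε). -/
open Matrix Complex

section aux

lemma omegaN_pow_N (N : ℕ) (hN : 2 ≤ N) : omegaN N ^ N = 1 := by
  have hNz : (N : ℂ) ≠ 0 := Nat.cast_ne_zero.mpr (by omega)
  rw [omegaN, ← Complex.exp_nat_mul, mul_div_cancel₀ _ hNz, Complex.exp_two_pi_mul_I]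

lemma omegaN_pow_mod (N : ℕ) (hN : 2 ≤ N) (x : ℕ) : omegaN N ^ (x % N) = omegaN N ^ x := by
  conv_rhs => rw [← Nat.div_add_mod x N]
  rw [pow_add, pow_mul, omegaN_pow_N N hN, one_pow, one_mul]

lemma omegaN_pow_half (N : ℕ) (hN : 2 ≤ N) (hNe : Even N) : omegaN N ^ (N / 2) = -1 := by
  have hNz : (N : ℂ) ≠ 0 := Nat.cast_ne_zero.mpr (by omega)
  obtain ⟨m, hm⟩ := hNe
  have hm2 : N = 2 * m := by omega
  rw [omegaN, ← Complex.exp_nat_mul]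
  have : (↑(N / 2) : ℂ) * (2 * (Real.pi : ℂ) * Complex.I / (N : ℂ)) = Real.pi * Complex.I := by
    have h2 : N / 2 = m := by omega
    rw [h2]
    field_simp
    rw [hm2]
    push_cast
    ring
  rw [this, Complex.exp_pi_mul_I]

end aux


/-- For `N` even, the spectrum of `h(a, b, ε)` equals the spectrum of `h(a, b, −ε)`. -/
theorem harper_spectrum_neg_eps_even (N : ℕ) (hN : 2 ≤ N) (hNe : Even N) (a b ε : ℝ) :
    spectrum ℂ (harper N a b ε) = spectrum ℂ (harper N a b (-ε)) := by
  haveI : NeZero N := ⟨by omega⟩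
  set m : Fin N := ⟨N / 2, by omega⟩ with hm
  set σ : Fin N ≃ Fin N := Equiv.addRight m with hσ
  have h1N : 1 % N = 1 := Nat.mod_eq_of_lt (by omega)
  have hcond : ∀ p q : Fin N, ((p : ℕ) = ((q : ℕ) + 1) % N) ↔ (p = q + 1) := by
    intro p q
    rw [Fin.ext_iff, Fin.val_add, Fin.val_one', h1N]
  have hX : (shiftX N).submatrix σ σ = shiftX N := by
    ext j k
    simp only [shiftX, submatrix_apply, of_apply, hσ, Equiv.coe_addRight]
    congr 1
    simp only [hcond]
    rw [add_right_comm k m 1]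
    exact propext ⟨fun h => add_right_cancel h, fun h => by rw [h]⟩
  have hZ : (clockZ N).submatrix σ σ = -clockZ N := by
    have hd : ((fun j : Fin N => omegaN N ^ (j : ℕ)) ∘ σ)
        = -fun j : Fin N => omegaN N ^ (j : ℕ) := by
      funext j
      show omegaN N ^ ((j + m : Fin N) : ℕ) = -(omegaN N ^ (j : ℕ))
      rw [Fin.val_add, omegaN_pow_mod N hN, pow_add]
      have hmv : ((m : Fin N) : ℕ) = N / 2 := rfl
      rw [hmv, omegaN_pow_half N hN hNe, mul_neg_one]
    rw [clockZ, Matrix.submatrix_diagonal_equiv, hd, Matrix.diagonal_neg]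
    rfl
  have hXH : ((shiftX N)ᴴ).submatrix σ σ = (shiftX N)ᴴ := by
    rw [← Matrix.conjTranspose_submatrix, hX]
  have hZH : ((clockZ N)ᴴ).submatrix σ σ = -(clockZ N)ᴴ := by
    rw [← Matrix.conjTranspose_submatrix, hZ, Matrix.conjTranspose_neg]
  have key : (harper N a b ε).submatrix σ σ = harper N a b (-ε) := by
    simp only [harper, Matrix.submatrix_add, Matrix.submatrix_smul,
      Pi.add_apply, Pi.smul_apply, hX, hZ, hXH, hZH]
    congr 1
    rw [← neg_add, smul_neg, ← neg_smul]
    congr 1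
    push_cast
    ring
  calc spectrum ℂ (harper N a b ε)
      = spectrum ℂ ((Matrix.reindexAlgEquiv ℂ ℂ σ.symm) (harper N a b ε)) :=
        (AlgEquiv.spectrum_eq _ _).symm
    _ = spectrum ℂ (harper N a b (-ε)) := by
        rw [Matrix.reindexAlgEquiv_apply, Matrix.reindex_apply, Equiv.symm_symm, key]
end

section
/- If ε ≠ 0, then every eigenvalue of the Harper matrix h(a, b, ε) has multiplicity at most 2; that is, every root of the characteristic polynomial of h(a, b, ε) has multiplicity at most 2, for all real a, b. -/
open Matrix Complex

/-!
Since `h` is Hermitian, the multiplicity of an eigenvalue as a root of the characteristic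
polynomial equals the dimension of its eigenspace. If `a ≠ 0`, the eigenvalue equation is a
three-term recurrence whose coefficient of `ψ (j + 1)` does not vanish, so an eigenvector is
determined by `ψ 0` and `ψ 1`. If `a = 0`, `h` is diagonal with entries `ε cos (2πj/N)`, and
`cos (2πj/N) = cos (2πk/N)` forces `k = ±j` in `ℤ/N`.
-/

open Module

theorem Matrix.IsHermitian.rootMultiplicity_charpoly_eq_finrank_eigenspace
    {𝕜 n : Type*} [RCLike 𝕜] [Fintype n] [DecidableEq n] {A : Matrix n n 𝕜}
    (hA : A.IsHermitian) (μ : 𝕜) :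
    A.charpoly.rootMultiplicity μ = finrank 𝕜 (End.eigenspace (toLin' A) μ) := by
  have hss : End.IsFinitelySemisimple (toLin' A) := by
    rw [End.isFinitelySemisimple_iff_isSemisimple,
      ← LinearEquiv.isSemisimple_iff (toEuclideanLin A) _ (WithLp.linearEquiv 2 𝕜 (n → 𝕜)) rfl,
      ← End.isFinitelySemisimple_iff_isSemisimple]
    exact (isSymmetric_toEuclideanLin_iff.mpr hA).isFinitelySemisimple
  rw [← charpoly_toLin', ← LinearMap.finrank_maxGenEigenspace_eq,
    hss.maxGenEigenspace_eq_eigenspace]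

theorem Submodule.finrank_le_card_of_eq_zero_of_forall_apply_eq_zero {K ι : Type*} [Field K]
    {W : Submodule K (ι → K)} (s : Finset ι) (h : ∀ ψ ∈ W, (∀ i ∈ s, ψ i = 0) → ψ = 0) :
    finrank K W ≤ s.card := by
  let restrict : W →ₗ[K] (s → K) := LinearMap.funLeft K K ((↑) : s → ι) ∘ₗ W.subtype
  have hinj : Function.Injective restrict := by
    rw [← LinearMap.ker_eq_bot, LinearMap.ker_eq_bot']
    intro ψ hψ
    exact Subtype.ext (h ψ ψ.2 fun i hi => congrFun hψ ⟨i, hi⟩)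
  simpa using LinearMap.finrank_le_finrank_of_injective hinj

theorem Matrix.finrank_eigenspace_toLin'_diagonal_le {K n : Type*} [Field K] [Fintype n]
    [DecidableEq n] [DecidableEq K] (d : n → K) (μ : K) :
    finrank K (End.eigenspace (toLin' (diagonal d)) μ)
      ≤ (Finset.univ.filter fun i => d i = μ).card := by
  refine Submodule.finrank_le_card_of_eq_zero_of_forall_apply_eq_zero _
    fun ψ hψ hs => funext fun i => ?_
  rw [End.mem_eigenspace_iff, toLin'_apply] at hψ
  have hrow : d i * ψ i = μ * ψ i := by simpa [mulVec_diagonal] using congrFun hψ i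
  by_cases hi : d i = μ
  · exact hs i (by simpa using hi)
  · exact (mul_eq_mul_right_iff.mp hrow).resolve_left hi

theorem eq_or_mul_eq_one_of_add_inv_eq_add_inv {K : Type*} [Field K] {x y : K}
    (hx : x ≠ 0) (hy : y ≠ 0) (h : x + x⁻¹ = y + y⁻¹) : x = y ∨ x * y = 1 := by
  have hfactor : (x - y) * (x * y - 1) = 0 := by
    field_simp at h
    linear_combination h
  rcases mul_eq_zero.mp hfactor with h | h
  · exact .inl (sub_eq_zero.mp h)
  · exact .inr (sub_eq_zero.mp h)

theorem IsPrimitiveRoot.eq_or_add_eq_zero_of_pow_add_inv_eq {K : Type*} [Field K] {ζ : K}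
    {N : ℕ} [NeZero N] (hζ : IsPrimitiveRoot ζ N) {j k : Fin N}
    (h : ζ ^ (j : ℕ) + (ζ ^ (j : ℕ))⁻¹ = ζ ^ (k : ℕ) + (ζ ^ (k : ℕ))⁻¹) :
    j = k ∨ j + k = 0 := by
  have hζ0 : ζ ≠ 0 := hζ.ne_zero (NeZero.ne N)
  rcases eq_or_mul_eq_one_of_add_inv_eq_add_inv (pow_ne_zero _ hζ0) (pow_ne_zero _ hζ0) h with h | h
  · exact .inl (Fin.ext (hζ.pow_inj j.isLt k.isLt h))
  · rw [← pow_add, hζ.pow_eq_one_iff_dvd] at h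
    exact .inr (Fin.ext (by simpa [Fin.val_add, Nat.dvd_iff_mod_eq_zero] using h))

theorem Finset.card_filter_eq_le_two_of_eq_or_add_eq_zero {G β : Type*} [AddGroup G]
    [Fintype G] [DecidableEq G] [DecidableEq β] {g : G → β}
    (hg : ∀ j k, g j = g k → j = k ∨ j + k = 0) (c : β) :
    (Finset.univ.filter fun j => g j = c).card ≤ 2 := by
  obtain ⟨j₀, hj₀⟩ | hempty := (Finset.univ.filter fun j => g j = c).eq_empty_or_nonempty.symm
  · refine (Finset.card_le_card fun j hj => ?_).trans (Finset.card_le_two (a := j₀) (b := -j₀))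
    simp only [Finset.mem_filter] at hj hj₀
    rcases hg j j₀ (hj.2.trans hj₀.2.symm) with rfl | h
    · simp
    · simp [eq_neg_of_add_eq_zero_left h]
  · simp [hempty]

theorem harper_isHermitian (N : ℕ) (a b ε : ℝ) : (harper N a b ε).IsHermitian := by
  set c : ℂ := (a : ℂ) / 2 * Complex.exp ((b : ℂ) * Complex.I)
  have hc : star c = (a : ℂ) / 2 * Complex.exp (-(b : ℂ) * Complex.I) := by
    simp [c, ← Complex.exp_conj, neg_mul]
  have hε : IsSelfAdjoint ((ε : ℂ) / 2) := by simp [IsSelfAdjoint, Complex.conj_ofReal]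
  have hsum : harper N a b ε
      = (c • shiftX N + (c • shiftX N)ᴴ) + ((ε : ℂ) / 2) • (clockZ N + (clockZ N)ᴴ) := by
    rw [conjTranspose_smul, hc]
    rfl
  rw [hsum]
  exact (isHermitian_add_transpose_self _).add ((isHermitian_add_transpose_self _).smul hε)

section Harper

variable {N : ℕ} [NeZero N]

theorem omegaN_isPrimitiveRoot : IsPrimitiveRoot (omegaN N) N := by
  simpa [omegaN] using Complex.isPrimitiveRoot_exp N (NeZero.ne N)

theorem clockZ_add_conjTranspose :
    clockZ N + (clockZ N)ᴴ
      = diagonal fun j : Fin N => omegaN N ^ (j : ℕ) + (omegaN N ^ (j : ℕ))⁻¹ := by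
  rw [clockZ, diagonal_conjTranspose, diagonal_add]
  congr 1
  funext j
  have hnorm : ‖omegaN N ^ (j : ℕ)‖ = 1 := by
    rw [norm_pow, omegaN_isPrimitiveRoot.norm'_eq_one (NeZero.ne N), one_pow]
  rw [Complex.inv_eq_conj hnorm]
  rfl

theorem shiftX_mulVec (ψ : Fin N → ℂ) (j : Fin N) : (shiftX N *ᵥ ψ) j = ψ (j - 1) := by
  have hcond : ∀ k : Fin N, ((j : ℕ) = ((k : ℕ) + 1) % N) ↔ k = j - 1 := fun k => by
    rw [eq_sub_iff_add_eq, eq_comm, Fin.ext_iff, Fin.val_add, Fin.val_one', Nat.add_mod_mod]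
  simp [mulVec, dotProduct, shiftX, hcond]

theorem conjTranspose_shiftX_mulVec (ψ : Fin N → ℂ) (j : Fin N) :
    ((shiftX N)ᴴ *ᵥ ψ) j = ψ (j + 1) := by
  have hcond : ∀ k : Fin N, ((k : ℕ) = ((j : ℕ) + 1) % N) ↔ k = j + 1 := fun k => by
    rw [Fin.ext_iff, Fin.val_add, Fin.val_one', Nat.add_mod_mod]
  simp [mulVec, dotProduct, shiftX, hcond]

theorem harper_mulVec_apply (a b ε : ℝ) (ψ : Fin N → ℂ) (j : Fin N) :
    (harper N a b ε *ᵥ ψ) j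
      = (a : ℂ) / 2 * Complex.exp ((b : ℂ) * Complex.I) * ψ (j - 1)
        + (a : ℂ) / 2 * Complex.exp (-(b : ℂ) * Complex.I) * ψ (j + 1)
        + (ε : ℂ) / 2 * (omegaN N ^ (j : ℕ) + (omegaN N ^ (j : ℕ))⁻¹) * ψ j := by
  simp only [harper, add_mulVec, smul_mulVec, clockZ_add_conjTranspose, Pi.add_apply,
    Pi.smul_apply, smul_eq_mul, shiftX_mulVec, conjTranspose_shiftX_mulVec, mulVec_diagonal]
  ring

theorem harper_zero_left (b ε : ℝ) :
    harper N 0 b ε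
      = diagonal fun j : Fin N => (ε : ℂ) / 2 * (omegaN N ^ (j : ℕ) + (omegaN N ^ (j : ℕ))⁻¹) := by
  simp [harper, clockZ_add_conjTranspose, ← diagonal_smul]

open Fin.NatCast in
theorem eq_zero_of_harper_mulVec_eq_smul {a : ℝ} (ha : a ≠ 0) (b ε : ℝ) {μ : ℂ}
    {ψ : Fin N → ℂ} (hψ : harper N a b ε *ᵥ ψ = μ • ψ) (h₀ : ψ 0 = 0) (h₁ : ψ 1 = 0) :
    ψ = 0 := by
  have step : ∀ j, ψ (j - 1) = 0 → ψ j = 0 → ψ (j + 1) = 0 := fun j hprev hj => by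
    have hrow := congrFun hψ j
    simpa [harper_mulVec_apply, hprev, hj, ha, Complex.exp_ne_zero] using hrow
  have hpair : ∀ n : ℕ, ψ (n : Fin N) = 0 ∧ ψ ((n : Fin N) + 1) = 0 := fun n => by
    induction n with
    | zero => simpa using ⟨h₀, h₁⟩
    | succ n ih =>
      exact ⟨by simpa using ih.2, by simpa using step (n + 1) (by simpa using ih.1) ih.2⟩
  funext j
  simpa using (hpair j).1

theorem finrank_eigenspace_harper_le_two {a : ℝ} (ha : a ≠ 0) (b ε : ℝ) (μ : ℂ) :
    finrank ℂ (End.eigenspace (toLin' (harper N a b ε)) μ) ≤ 2 := by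
  refine (Submodule.finrank_le_card_of_eq_zero_of_forall_apply_eq_zero {0, 1}
    fun ψ hψ hs => ?_).trans Finset.card_le_two
  rw [End.mem_eigenspace_iff, toLin'_apply] at hψ
  exact eq_zero_of_harper_mulVec_eq_smul ha b ε hψ (hs 0 (by simp)) (hs 1 (by simp))

theorem finrank_eigenspace_harper_zero_left_le_two (b : ℝ) {ε : ℝ} (hε : ε ≠ 0) (μ : ℂ) :
    finrank ℂ (End.eigenspace (toLin' (harper N 0 b ε)) μ) ≤ 2 := by
  rw [harper_zero_left]
  refine (finrank_eigenspace_toLin'_diagonal_le _ μ).trans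
    (Finset.card_filter_eq_le_two_of_eq_or_add_eq_zero (fun j k h => ?_) μ)
  exact omegaN_isPrimitiveRoot.eq_or_add_eq_zero_of_pow_add_inv_eq
    (mul_left_cancel₀ (by simpa using hε) h)

end Harper

/-- If `ε ≠ 0`, every root of the characteristic polynomial of the Harper matrix has
multiplicity at most `2`. -/
theorem harper_eigenvalue_multiplicity_le_two (N : ℕ) (hN : 2 ≤ N) (a b ε : ℝ)
    (hε : ε ≠ 0) (lam : ℂ) :
    Polynomial.rootMultiplicity lam (Matrix.charpoly (harper N a b ε)) ≤ 2 := by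
  have : NeZero N := ⟨by omega⟩
  rw [(harper_isHermitian N a b ε).rootMultiplicity_charpoly_eq_finrank_eigenspace]
  rcases eq_or_ne a 0 with rfl | ha
  · exact finrank_eigenspace_harper_zero_left_le_two b hε lam
  · exact finrank_eigenspace_harper_le_two ha b ε lam
end
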